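/- arXiv:2102.12977 — 5 statements merged into one kernel-verified Lean document; each statement's English description precedes it below -/
import Mathlib

section
/- Let p be a prime with p ≡ 1 (mod 16). Let π ∈ ℤ[√2] be an element of norm p with conjugate π′, and let i ∈ 𝔽_p satisfy i² = −1. Then π is a square modulo π′ if and only if 1 + i is a square in 𝔽_p. -/
/-!
Write `π = a + b√2`. Modulo `π′ = a - b√2` one has `√2 ≡ a / b`, which gives a ring map
`ℤ[√2] → 𝔽_p` killing `π′` and sending `π` to `2a`; hence `π` is a square modulo `π′` iff `2a` is
a square in `𝔽_p`. In `𝔽_p` we have `(2a)² = 2 (2b)²` and `(1 + i)² = 2i`. By quadratic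
reciprocity `b` is a square (for the odd part `m` of `b`, `(m/p) = (p/m) = (a²/m) = 1`), so
`(2b)²` is a fourth power, and `i` is a fourth power because `p ≡ 1 (mod 16)`. Euler's criterion
then gives `2a` and `1 + i` the same value `2 ^ ((p - 1) / 4)`.
-/

namespace Zsqrtd

variable {d : ℤ}

theorem mul_self_dvd_norm {z : ℤ√d} {g : ℤ} (hre : g ∣ z.re) (him : g ∣ z.im) :
    g * g ∣ z.norm := by
  rw [norm_def]
  exact dvd_sub (mul_dvd_mul hre hre) (mul_dvd_mul (dvd_mul_of_dvd_right him d) him)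

theorem isCoprime_re_im {z : ℤ√d} (hz : Squarefree z.norm) : IsCoprime z.re z.im := by
  rw [Int.isCoprime_iff_gcd_eq_one]
  simpa using Int.isUnit_iff_natAbs_eq.1
    (hz _ (mul_self_dvd_norm (Int.gcd_dvd_left z.re z.im) (Int.gcd_dvd_right z.re z.im)))

theorem intCast_im_ne_zero {p : ℕ} (hp : p.Prime) {z : ℤ√d} (hz : z.norm = p) :
    (z.im : ZMod p) ≠ 0 := by
  have hp' : Prime (p : ℤ) := Nat.prime_iff_prime_int.1 hp
  rw [Ne, ZMod.intCast_zmod_eq_zero_iff_dvd]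
  intro him
  have hre : (p : ℤ) ∣ z.re := hp'.dvd_of_dvd_pow (n := 2) <| by
    rw [show z.re ^ 2 = z.norm + d * z.im * z.im by rw [norm_def]; ring, hz]
    exact dvd_add dvd_rfl (dvd_mul_of_dvd_right him _)
  have hpp := mul_self_dvd_norm hre him
  rw [hz] at hpp
  exact hp'.not_isUnit (hp'.squarefree _ hpp)

theorem add_star_eq_two_mul_re (z : ℤ√d) : z + star z = 2 * (z.re : ℤ√d) := by
  ext <;> simp [two_mul]

theorem exists_ringHom_map_star_eq_zero {K : Type*} [Field K] {π : ℤ√d}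
    (hnorm : (π.norm : K) = 0) (him : (π.im : K) ≠ 0) :
    ∃ φ : ℤ√d →+* K, φ (star π) = 0 := by
  have hr : (π.re / π.im : K) * (π.re / π.im) = d := by
    rw [norm_def] at hnorm
    push_cast at hnorm
    field_simp
    linear_combination hnorm
  refine ⟨lift ⟨_, hr⟩, ?_⟩
  rw [lift_apply_apply, re_star, im_star]
  field_simp
  push_cast
  ring

theorem isSquare_two_mul_re_of_star_dvd_sub_sq {K : Type*} [Field K] {π σ : ℤ√d}
    (hnorm : (π.norm : K) = 0) (him : (π.im : K) ≠ 0) (h : star π ∣ π - σ ^ 2) :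
    IsSquare (2 * (π.re : K)) := by
  obtain ⟨φ, hφ⟩ := exists_ringHom_map_star_eq_zero hnorm him
  obtain ⟨w, hw⟩ := h
  have hπ : φ π = 2 * π.re := by
    rw [← add_zero (φ π), ← hφ, ← map_add, add_star_eq_two_mul_re, map_mul, map_ofNat, map_intCast]
  have := congrArg φ hw
  rw [map_sub, map_pow, map_mul, hφ, zero_mul, sub_eq_zero, hπ] at this
  exact ⟨φ σ, by rw [this, sq]⟩

theorem star_dvd_sub_sq_of_dvd {π : ℤ√d} {n : ℤ} (hπ : π.norm = n) {x : ℤ}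
    (hx : n ∣ x ^ 2 - 2 * π.re) : star π ∣ π - (x : ℤ√d) ^ 2 := by
  obtain ⟨m, hm⟩ := hx
  have hx2 : (x : ℤ√d) ^ 2 = 2 * π.re + n * m := by
    rw [← sub_eq_iff_eq_add']
    exact_mod_cast hm
  refine ⟨-(1 + π * m), ?_⟩
  rw [hx2, ← hπ, norm_eq_mul_conj, ← add_star_eq_two_mul_re]
  ring

theorem exists_star_dvd_sub_sq_iff {p : ℕ} [Fact p.Prime] {π : ℤ√d} (hπ : π.norm = p) :
    (∃ σ, star π ∣ π - σ ^ 2) ↔ IsSquare (2 * (π.re : ZMod p)) := by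
  constructor
  · rintro ⟨σ, h⟩
    exact isSquare_two_mul_re_of_star_dvd_sub_sq (by simp [hπ])
      (intCast_im_ne_zero Fact.out hπ) h
  · rintro ⟨s, hs⟩
    obtain ⟨x, rfl⟩ := ZMod.intCast_surjective s
    refine ⟨x, star_dvd_sub_sq_of_dvd hπ ((ZMod.intCast_zmod_eq_zero_iff_dvd _ p).1 ?_)⟩
    push_cast
    rw [hs]
    ring

theorem isSquare_intCast_im {p : ℕ} [Fact p.Prime] (hp : p % 8 = 1) {π : ℤ√d}
    (hπ : π.norm = p) : IsSquare (π.im : ZMod p) := by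
  suffices h : IsSquare (π.im.natAbs : ZMod p) by
    have hneg : IsSquare (-1 : ZMod p) := ZMod.exists_sq_eq_neg_one_iff.2 (by omega)
    rcases Int.natAbs_eq π.im with him | him <;> rw [him]
    · rwa [Int.cast_natCast]
    · rw [Int.cast_neg, Int.cast_natCast, ← neg_one_mul]
      exact hneg.mul h
  rcases eq_or_ne π.im.natAbs 0 with h0 | h0
  · rw [h0, Nat.cast_zero]
    exact IsSquare.zero
  obtain ⟨k, m, hm, hkm⟩ := Nat.exists_eq_two_pow_mul_odd h0
  have htwo : IsSquare (2 : ZMod p) := (ZMod.exists_sq_eq_two_iff (by omega)).2 (.inl hp)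
  have hmim : (m : ℤ) ∣ π.im := Int.natCast_dvd.2 (hkm ▸ dvd_mul_left m _)
  have hcop : IsCoprime π.re m :=
    (isCoprime_re_im (hπ ▸ (Nat.prime_iff_prime_int.1 Fact.out).squarefree)
      ).of_isCoprime_of_dvd_right hmim
  have hpm : (p : ℤ) ≡ π.re ^ 2 [ZMOD m] := Int.modEq_iff_dvd.2 <| by
    rw [← hπ, norm_def, show π.re ^ 2 - (π.re * π.re - d * π.im * π.im) = d * π.im * π.im by ring]
    exact dvd_mul_of_dvd_right hmim _
  have hJ : jacobiSym m p = 1 := by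
    rw [← jacobiSym.quadratic_reciprocity_one_mod_four (by omega) hm, jacobiSym.mod_left' hpm]
    exact jacobiSym.sq_one' (Int.isCoprime_iff_gcd_eq_one.1 hcop)
  rw [hkm]
  push_cast
  exact (htwo.pow k).mul (by exact_mod_cast ZMod.isSquare_of_jacobiSym_eq_one hJ)

end Zsqrtd

theorem ZMod.pow_div_two_eq_of_sq_eq_mul {p : ℕ} (hp : p % 4 = 1) {x c y : ZMod p}
    (h : x ^ 2 = c * y) (hy : y ^ (p / 4) = 1) : x ^ (p / 2) = c ^ (p / 4) := by
  rw [show p / 2 = 2 * (p / 4) by omega, pow_mul, h, mul_pow, hy, mul_one]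

/-- Let `p ≡ 1 (mod 16)` be prime, `π ∈ ℤ[√2]` of norm `p` with conjugate `π′ = star π`,
and `i ∈ 𝔽_p` with `i² = −1`. Then `π` is a square modulo `π′` if and only if `1 + i`
is a square in `𝔽_p`. -/
theorem sq_mod_conj_iff_one_add_i_sq (p : ℕ) (hp : Nat.Prime p) (hmod : p % 16 = 1)
    (π : ℤ√2) (hπ : π.norm = (p : ℤ)) (i : ZMod p) (hi : i ^ 2 = -1) :
    (∃ σ : ℤ√2, star π ∣ π - σ ^ 2) ↔ ∃ t : ZMod p, t ^ 2 = 1 + i := by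
  have := Fact.mk hp
  have h2 : (2 : ZMod p) ≠ 0 := Ring.two_ne_zero (by rw [ZMod.ringChar_zmod_n]; omega)
  have hb := Zsqrtd.intCast_im_ne_zero hp hπ
  have hab : (π.re : ZMod p) ^ 2 = 2 * π.im ^ 2 := by
    have := congrArg (Int.cast : ℤ → ZMod p) hπ
    rw [Zsqrtd.norm_def] at this
    push_cast [ZMod.natCast_self] at this
    linear_combination this
  have ha : (π.re : ZMod p) ≠ 0 := fun ha ↦ hb (by simpa [ha, h2] using hab)
  have hi1 : 1 + i ≠ 0 := fun hi1 ↦ h2 (by linear_combination hi - (i - 1) * hi1)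
  have euler {x y : ZMod p} (hx : x ≠ 0) (h : x ^ 2 = 2 * y) (hy : y ^ (p / 4) = 1) :
      IsSquare x ↔ (2 : ZMod p) ^ (p / 4) = 1 := by
    rw [ZMod.euler_criterion p hx, ZMod.pow_div_two_eq_of_sq_eq_mul (by omega) h hy]
  have h2b : ((2 * π.im : ZMod p) ^ 2) ^ (p / 4) = 1 := by
    rw [← pow_mul, show 2 * (p / 4) = p / 2 by omega, ← ZMod.euler_criterion p (mul_ne_zero h2 hb)]
    exact ((ZMod.exists_sq_eq_two_iff (by omega)).2 (.inl (by omega))).mul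
      (Zsqrtd.isSquare_intCast_im (by omega) hπ)
  have hi4 : i ^ (p / 4) = 1 := by
    rw [show p / 4 = 2 * (2 * (p / 16)) by omega, pow_mul, hi, pow_mul, neg_one_sq, one_pow]
  rw [Zsqrtd.exists_star_dvd_sub_sq_iff hπ,
    euler (mul_ne_zero h2 ha) (by linear_combination 4 * hab) h2b,
    ← euler hi1 (by linear_combination hi) hi4, isSquare_iff_exists_sq]
  simp only [eq_comm]
end

section
/- Let p be a prime with p ≡ 9 (mod 16). Let π ∈ ℤ[√2] be an element of norm p with conjugate π′, and let i ∈ 𝔽_p satisfy i² = −1. Then exactly one of the following two statements holds: (a) π is a square modulo π′; (b) 1 + i is a square in 𝔽_p. -/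
/-!
Write `π = a + b√2`. Reduction modulo `π′` is the ring map `ℤ[√2] → 𝔽_p` sending `√2` to `a / b`;
its kernel is `π′ ℤ[√2]` because `π′` has prime norm, and it sends `π` to `2a`. So (a) says that
`2a`, equivalently `a`, is a square in `𝔽_p`. In `𝔽_p` we have `a² = 2b²`, and `b` is a square by
quadratic reciprocity, so Euler's criterion gives `a^((p-1)/2) = 2^((p-1)/4)`. On the other side
`(1 + i)² = 2i` and `(p - 1)/4 ≡ 2 (mod 4)`, so `(1 + i)^((p-1)/2) = -2^((p-1)/4)`. Since `2` is a
square mod `p`, `2^((p-1)/4) = ±1`, and exactly one of `a`, `1 + i` is a square.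
-/

namespace Zsqrtd

section

variable {d : ℤ}

theorem intCast_mul_left_cancel {n : ℤ} (hn : n ≠ 0) {x y : ℤ√d}
    (h : (n : ℤ√d) * x = n * y) : x = y := by
  have hre := congrArg re h
  have him := congrArg im h
  simp only [re_mul, im_mul, re_intCast, im_intCast, mul_zero, zero_mul, add_zero] at hre him
  ext
  · exact mul_left_cancel₀ hn hre
  · exact mul_left_cancel₀ hn him

theorem dvd_iff_norm_dvd_star_mul {π z : ℤ√d} (hπ : π.norm ≠ 0) :
    π ∣ z ↔ (π.norm : ℤ√d) ∣ star π * z := by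
  rw [norm_eq_mul_conj]
  constructor
  · rintro ⟨w, rfl⟩
    exact ⟨w, by ring⟩
  · rintro ⟨w, hw⟩
    refine ⟨w, intCast_mul_left_cancel hπ ?_⟩
    rw [norm_eq_mul_conj]
    linear_combination π * hw

variable {p : ℕ} {π : ℤ√d}

theorem not_dvd_im_of_norm_eq_prime (hp : p.Prime) (hπ : π.norm = p) : ¬ (p : ℤ) ∣ π.im := by
  rintro ⟨c, hc⟩
  rw [norm_def, hc] at hπ
  have hpp : Prime (p : ℤ) := Nat.prime_iff_prime_int.mp hp
  obtain ⟨e, he⟩ : (p : ℤ) ∣ π.re :=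
    hpp.dvd_of_dvd_pow (n := 2) ⟨1 + d * p * c * c, by linear_combination hπ⟩
  rw [he] at hπ
  have hunit : (p : ℤ) * (p * (e * e - d * c * c)) = p * 1 := by linear_combination hπ
  exact hpp.not_isUnit (IsUnit.of_mul_eq_one _ (mul_left_cancel₀ hpp.ne_zero hunit))

variable [Fact p.Prime]

theorem intCast_im_ne_zero_s7 (hπ : π.norm = p) : (π.im : ZMod p) ≠ 0 := by
  rw [Ne, ZMod.intCast_zmod_eq_zero_iff_dvd]
  exact not_dvd_im_of_norm_eq_prime Fact.out hπ

theorem intCast_re_sq (hπ : π.norm = p) : (π.re : ZMod p) ^ 2 = d * (π.im : ZMod p) ^ 2 := by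
  have := congrArg (Int.cast : ℤ → ZMod p) hπ
  push_cast [norm_def, ZMod.natCast_self] at this
  linear_combination this

noncomputable def reduceMod (π : ℤ√d) (hπ : π.norm = p) : ℤ√d →+* ZMod p :=
  lift ⟨-((π.re : ZMod p) / π.im), by
    have := intCast_im_ne_zero_s7 hπ
    field_simp
    linear_combination intCast_re_sq hπ⟩

theorem reduceMod_apply (hπ : π.norm = p) (z : ℤ√d) :
    reduceMod π hπ z = z.re - z.im * ((π.re : ZMod p) / π.im) := by
  simp [reduceMod, sub_eq_add_neg]

theorem reduceMod_star_self (hπ : π.norm = p) : reduceMod π hπ (star π) = 2 * π.re := by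
  have := intCast_im_ne_zero_s7 hπ
  rw [reduceMod_apply, re_star, im_star]
  field_simp
  push_cast
  ring

theorem intCast_re_star_mul (hπ : π.norm = p) (z : ℤ√d) :
    ((star π * z).re : ZMod p) = π.re * reduceMod π hπ z := by
  have := intCast_im_ne_zero_s7 hπ
  rw [reduceMod_apply, re_mul, re_star, im_star]
  push_cast
  linear_combination ((z.im : ZMod p) / π.im) * intCast_re_sq hπ +
    (d * π.im * z.im : ZMod p) * mul_inv_cancel₀ this

theorem intCast_im_star_mul (hπ : π.norm = p) (z : ℤ√d) :
    ((star π * z).im : ZMod p) = -(π.im * reduceMod π hπ z) := by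
  have := intCast_im_ne_zero_s7 hπ
  rw [reduceMod_apply, im_mul, re_star, im_star]
  push_cast
  field_simp
  ring

theorem dvd_iff_reduceMod_eq_zero (hπ : π.norm = p) {z : ℤ√d} :
    π ∣ z ↔ reduceMod π hπ z = 0 := by
  have hp0 : π.norm ≠ 0 := by rw [hπ]; exact_mod_cast (Fact.out : p.Prime).ne_zero
  rw [dvd_iff_norm_dvd_star_mul hp0, intCast_dvd, hπ, ← ZMod.intCast_zmod_eq_zero_iff_dvd,
    ← ZMod.intCast_zmod_eq_zero_iff_dvd, intCast_re_star_mul hπ, intCast_im_star_mul hπ, neg_eq_zero,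
    mul_eq_zero, mul_eq_zero, or_iff_right (intCast_im_ne_zero_s7 hπ)]
  exact and_iff_right_of_imp Or.inr

theorem exists_dvd_sub_sq_iff (hπ : π.norm = p) {z : ℤ√d} :
    (∃ σ : ℤ√d, π ∣ z - σ ^ 2) ↔ IsSquare (reduceMod π hπ z) := by
  simp only [dvd_iff_reduceMod_eq_zero hπ, map_sub, map_pow, sub_eq_zero]
  constructor
  · rintro ⟨σ, hσ⟩
    exact ⟨reduceMod π hπ σ, by rw [hσ, sq]⟩
  · rintro ⟨r, hr⟩
    obtain ⟨T, rfl⟩ := ZMod.intCast_surjective r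
    exact ⟨T, by rw [hr, map_intCast, sq]⟩

end

open scoped NumberTheorySymbols in
/-- For the odd part `m` of `π.im`, `J(m | p) = J(p | m) = J(π.re ^ 2 | m) = 1`; the rest of
`π.im` is a power of `2` times `±1`, and both are squares mod `p`. -/
theorem isSquare_intCast_im_of_norm_eq {p : ℕ} [Fact p.Prime] {π : ℤ√2} (hp8 : p % 8 = 1)
    (hπ : π.norm = p) : IsSquare (π.im : ZMod p) := by
  have hB := not_dvd_im_of_norm_eq_prime Fact.out hπ
  have hB0 : π.im ≠ 0 := fun h => hB (h ▸ dvd_zero _)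
  obtain ⟨e, m, hm, hBm⟩ := Nat.exists_eq_two_pow_mul_odd (Int.natAbs_ne_zero.mpr hB0)
  have hmB : (m : ℤ) ∣ π.im := Int.natCast_dvd.mpr ⟨2 ^ e, by rw [hBm, mul_comm]⟩
  have hJ : J((m : ℤ) | p) = 1 := by
    have hJ0 : J((m : ℤ) | p) ≠ 0 := by
      rw [← jacobiSym.legendreSym.to_jacobiSym, Ne, legendreSym.eq_zero_iff,
        ZMod.intCast_zmod_eq_zero_iff_dvd]
      exact fun h => hB (h.trans hmB)
    have hrec : J((m : ℤ) | p) = J(π.re | m) ^ 2 := by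
      rw [jacobiSym.quadratic_reciprocity_one_mod_four' hm (by omega), ← jacobiSym.pow_left]
      refine jacobiSym.mod_left' (Int.modEq_iff_dvd.mpr ?_)
      obtain ⟨c, hc⟩ := hmB
      exact ⟨2 * c * π.im, by rw [← hπ, norm_def]; linear_combination 2 * π.im * hc⟩
    rcases jacobiSym.trichotomy π.re m with h | h | h <;> simp_all
  have hm : IsSquare ((π.im.natAbs : ℤ) : ZMod p) := by
    rw [hBm]
    push_cast
    exact (((ZMod.exists_sq_eq_two_iff (by omega)).mpr (Or.inl hp8)).pow e).mul
      (by exact_mod_cast ZMod.isSquare_of_jacobiSym_eq_one hJ)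
  rcases Int.natAbs_eq π.im with h | h <;> rw [h]
  · exact hm
  · rw [Int.cast_neg, neg_eq_neg_one_mul]
    exact (ZMod.exists_sq_eq_neg_one_iff.mpr (by omega)).mul hm

end Zsqrtd

namespace ZMod

variable {p : ℕ} [Fact p.Prime]

theorem two_ne_zero_of_ne_two (hp : p ≠ 2) : (2 : ZMod p) ≠ 0 :=
  Ring.two_ne_zero (by rwa [ZMod.ringChar_zmod_n])

theorem two_pow_div_two_eq_one (hp8 : p % 8 = 1) : (2 : ZMod p) ^ (p / 2) = 1 := by
  have hp2 : p ≠ 2 := by omega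
  rw [← euler_criterion p (two_ne_zero_of_ne_two hp2)]
  exact (exists_sq_eq_two_iff hp2).mpr (Or.inl hp8)

theorem pow_div_two_eq_two_pow_div_four (hp4 : p % 4 = 1) {a b : ZMod p} (hab : a ^ 2 = 2 * b ^ 2)
    (hb : IsSquare b) (hb0 : b ≠ 0) : a ^ (p / 2) = 2 ^ (p / 4) := by
  have hhalf : p / 2 = 2 * (p / 4) := by omega
  rw [hhalf, pow_mul, hab, mul_pow, ← pow_mul, ← hhalf, (euler_criterion p hb0).mp hb, mul_one]

theorem one_add_pow_div_two_eq_neg_two_pow_div_four (hp16 : p % 16 = 9) {i : ZMod p}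
    (hi : i ^ 2 = -1) : (1 + i) ^ (p / 2) = -2 ^ (p / 4) := by
  have hi' : i ^ (p / 4) = -1 := by
    rw [show p / 4 = 2 * (p / 8) by omega, pow_mul, hi]
    exact Odd.neg_one_pow ⟨p / 16, by omega⟩
  rw [show p / 2 = 2 * (p / 4) by omega, pow_mul, show (1 + i) ^ 2 = 2 * i by
    linear_combination hi, mul_pow, hi', mul_neg_one]

end ZMod

theorem xor_eq_one_eq_neg_one_of_sq_eq_one {R : Type*} [Ring R] [NoZeroDivisors R] {u : R}
    (hR : (-1 : R) ≠ 1) (hu : u ^ 2 = 1) : Xor (u = 1) (u = -1) := by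
  rcases mul_self_eq_one_iff.mp (sq u ▸ hu) with rfl | rfl
  · exact Or.inl ⟨rfl, fun h => hR h.symm⟩
  · exact Or.inr ⟨rfl, hR⟩

open Zsqrtd in
/-- Let `p ≡ 9 (mod 16)` be prime, `π ∈ ℤ[√2]` of norm `p` with conjugate `π′ = star π`,
and `i ∈ 𝔽_p` with `i² = −1`. Then exactly one of the following holds:
(a) `π` is a square modulo `π′`; (b) `1 + i` is a square in `𝔽_p`. -/
theorem sq_mod_conj_xor_one_add_i_sq (p : ℕ) (hp : Nat.Prime p) (hmod : p % 16 = 9)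
    (π : ℤ√2) (hπ : π.norm = (p : ℤ)) (i : ZMod p) (hi : i ^ 2 = -1) :
    Xor' (∃ σ : ℤ√2, star π ∣ π - σ ^ 2) (∃ t : ZMod p, t ^ 2 = 1 + i) := by
  have : Fact p.Prime := ⟨hp⟩
  have h2 : (2 : ZMod p) ≠ 0 := ZMod.two_ne_zero_of_ne_two (by omega)
  have h2pow : (2 : ZMod p) ^ (p / 2) = 1 := ZMod.two_pow_div_two_eq_one (by omega)
  have hab : (π.re : ZMod p) ^ 2 = 2 * (π.im : ZMod p) ^ 2 := by exact_mod_cast intCast_re_sq hπ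
  have hre : (π.re : ZMod p) ≠ 0 := fun h =>
    intCast_im_ne_zero_s7 hπ (by simpa [h, h2] using hab)
  have hρ : (star π).norm = p := by rw [norm_conj, hπ]
  have hρπ : reduceMod (star π) hρ π = 2 * π.re := by
    simpa only [star_star, re_star] using reduceMod_star_self hρ
  have ha : (∃ σ : ℤ√2, star π ∣ π - σ ^ 2) ↔ (2 : ZMod p) ^ (p / 4) = 1 := by
    rw [exists_dvd_sub_sq_iff hρ, hρπ, ZMod.euler_criterion p (mul_ne_zero h2 hre), mul_pow, h2pow,
      one_mul, ZMod.pow_div_two_eq_two_pow_div_four (by omega) hab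
      (isSquare_intCast_im_of_norm_eq (by omega) hπ) (intCast_im_ne_zero_s7 hπ)]
  have hb : (∃ t : ZMod p, t ^ 2 = 1 + i) ↔ (2 : ZMod p) ^ (p / 4) = -1 := by
    have h1i : 1 + i ≠ 0 := fun h => h2 (by linear_combination (1 - i) * h + hi)
    rw [show (∃ t : ZMod p, t ^ 2 = 1 + i) ↔ IsSquare (1 + i) by
      simp only [isSquare_iff_exists_sq, eq_comm], ZMod.euler_criterion p h1i,
      ZMod.one_add_pow_div_two_eq_neg_two_pow_div_four hmod hi, neg_eq_iff_eq_neg]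
  rw [ha, hb]
  refine xor_eq_one_eq_neg_one_of_sq_eq_one (fun h => h2 (by linear_combination -h)) ?_
  rw [← pow_mul, show p / 4 * 2 = p / 2 by omega, h2pow]
end

section
/- For any prime p with p ≡ 1 (mod 4), there exists a unit u in the ring of integers of the real quadratic field ℚ(√p) whose norm to ℚ equals −1 (equivalently, a fundamental unit of ℚ(√p) has norm −1). -/
/-!
Let `(x, y)` be the fundamental solution of `x ^ 2 - p * y ^ 2 = 1`. Since `p ≡ 1 (mod 4)`, `x` is
odd and `y` even, so `x = 2m + 1`, `y = 2n` with `m (m + 1) = p n ^ 2`. As `m` and `m + 1` are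
coprime, either `m = s ^ 2, m + 1 = p t ^ 2`, giving `s ^ 2 - p t ^ 2 = -1`, or
`m = p s ^ 2, m + 1 = t ^ 2`, giving a solution `(t, s)` with `1 < t < x`, contradicting the
minimality of `x`.
In `ℚ(√p) ≅ ℚ[ω]/(ω ^ 2 - p)` the norm of `a + b √p` is `a ^ 2 - p b ^ 2`, so `a + b √p` is the
required unit.
-/

open Module NumberField QuadraticAlgebra

theorem Int.odd_and_even_of_sq_sub_mul_sq_eq_one {d x y : ℤ} (hd : d % 4 = 1)
    (h : x ^ 2 - d * y ^ 2 = 1) : Odd x ∧ Even y := by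
  have hsq (z : ℤ) : Even z ∧ z ^ 2 % 4 = 0 ∨ Odd z ∧ z ^ 2 % 4 = 1 := by
    rcases Int.even_or_odd' z with ⟨k, rfl | rfl⟩
    · exact .inl ⟨by simp, by ring_nf; omega⟩
    · exact .inr ⟨by simp [parity_simps], by ring_nf; omega⟩
  have hdy : d * y ^ 2 % 4 = y ^ 2 % 4 := by rw [Int.mul_emod, hd, one_mul, Int.emod_emod]
  rcases hsq x with ⟨-, hx⟩ | ⟨hx_odd, hx⟩ <;> rcases hsq y with ⟨hy_even, hy⟩ | ⟨-, hy⟩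
  all_goals first | exact ⟨hx_odd, hy_even⟩ | omega

theorem Int.exists_eq_sq_of_isCoprime_of_pos {a b c : ℤ} (h : IsCoprime a b) (ha : 0 < a)
    (heq : a * b = c ^ 2) : ∃ s, a = s ^ 2 := by
  obtain ⟨s, hs | hs⟩ := Int.sq_of_isCoprime h heq
  · exact ⟨s, hs⟩
  · nlinarith [sq_nonneg s]

theorem Int.exists_eq_sq_and_eq_mul_sq_of_dvd {p m k n : ℤ} (hp : 0 < p) (hcop : IsCoprime m k)
    (hm : 0 < m) (hk : 0 < k) (h : m * k = p * n ^ 2) (hpk : p ∣ k) :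
    ∃ s t, m = s ^ 2 ∧ k = p * t ^ 2 := by
  obtain ⟨w, rfl⟩ := hpk
  have hw : 0 < w := pos_of_mul_pos_right hk hp.le
  have hcop' : IsCoprime m w := hcop.of_mul_right_right
  have hmw : m * w = n ^ 2 := mul_left_cancel₀ hp.ne' (by rw [← h]; ring)
  obtain ⟨s, rfl⟩ := Int.exists_eq_sq_of_isCoprime_of_pos hcop' hm hmw
  obtain ⟨t, rfl⟩ := Int.exists_eq_sq_of_isCoprime_of_pos hcop'.symm hw (by rw [mul_comm, hmw])
  exact ⟨s, t, rfl, rfl⟩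

theorem Int.exists_sq_of_mul_eq_prime_mul_sq {p m k n : ℤ} (hp : Prime p) (hp0 : 0 < p)
    (hcop : IsCoprime m k) (hm : 0 < m) (hk : 0 < k) (h : m * k = p * n ^ 2) :
    (∃ s t, m = s ^ 2 ∧ k = p * t ^ 2) ∨ (∃ s t, m = p * s ^ 2 ∧ k = t ^ 2) := by
  rcases hp.dvd_mul.1 ⟨n ^ 2, h⟩ with hpm | hpk
  · obtain ⟨t, s, hk, hm⟩ :=
      Int.exists_eq_sq_and_eq_mul_sq_of_dvd hp0 hcop.symm hk hm (by rw [mul_comm, h]) hpm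
    exact .inr ⟨s, t, hm, hk⟩
  · exact .inl (Int.exists_eq_sq_and_eq_mul_sq_of_dvd hp0 hcop hm hk h hpk)

theorem Nat.Prime.exists_sq_sub_mul_sq_eq_neg_one {p : ℕ} (hp : p.Prime) (hmod : p % 4 = 1) :
    ∃ a b : ℤ, a ^ 2 - p * b ^ 2 = -1 := by
  have hpz : _root_.Prime (p : ℤ) := Nat.prime_iff_prime_int.mp hp
  have hp0 : (0 : ℤ) < p := by exact_mod_cast hp.pos
  obtain ⟨u, hu⟩ := Pell.IsFundamental.exists_of_not_isSquare hp0 hpz.not_isSquare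
  obtain ⟨⟨m, hm⟩, ⟨n, hn⟩⟩ := Int.odd_and_even_of_sq_sub_mul_sq_eq_one (by omega) u.prop
  have hm0 : 0 < m := by linarith [hu.1]
  have hmn : m * (m + 1) = p * n ^ 2 := by
    have hxy := u.prop
    rw [hm, hn] at hxy
    linarith
  rcases Int.exists_sq_of_mul_eq_prime_mul_sq hpz hp0 ⟨-1, 1, by ring⟩ hm0 (by omega) hmn with
    ⟨s, t, rfl, ht⟩ | ⟨s, t, hs, ht⟩
  · exact ⟨s, t, by linear_combination ht⟩
  · have hts : |t| ^ 2 - p * s ^ 2 = 1 := by rw [sq_abs]; linear_combination hs - ht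
    have ht1 : 1 < |t| := by nlinarith [abs_nonneg t, sq_abs t]
    have hle := hu.x_le_x (a := .mk |t| s hts) ht1
    rw [Pell.Solution₁.x_mk, hm] at hle
    nlinarith [sq_abs t]

theorem Algebra.norm_quadraticAlgebra_apply {R : Type*} [CommRing R] {a b : R}
    (z : QuadraticAlgebra R a b) : Algebra.norm R z = z.norm := by
  rw [Algebra.norm_apply]
  exact det_toLinearMap_eq_norm z

namespace QuadraticAlgebra

variable {F L : Type*} [Field F] [Field L] [Algebra F L] {a b : F} [Fact (∀ r, r ^ 2 ≠ a + b * r)]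

theorem lift_bijective (hL : finrank F L = 2) (x : L) (hx : x * x = a • 1 + b • x) :
    Function.Bijective (lift (a := a) (b := b) ⟨x, hx⟩) := by
  have : FiniteDimensional F L := .of_finrank_pos (by omega)
  have hinj := (lift (a := a) (b := b) ⟨x, hx⟩).toRingHom.injective
  exact ⟨hinj, (LinearMap.injective_iff_surjective_of_finrank_eq_finrank
    (f := (lift (a := a) (b := b) ⟨x, hx⟩).toLinearMap) (by rw [finrank_eq_two, hL])).1 hinj⟩

noncomputable def algEquivOfFinrankEqTwo (hL : finrank F L = 2) (x : L)
    (hx : x * x = a • 1 + b • x) : QuadraticAlgebra F a b ≃ₐ[F] L :=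
  AlgEquiv.ofBijective _ (lift_bijective hL x hx)

theorem algEquivOfFinrankEqTwo_apply (hL : finrank F L = 2) (x : L)
    (hx : x * x = a • 1 + b • x) (z : QuadraticAlgebra F a b) :
    algEquivOfFinrankEqTwo hL x hx z = algebraMap F L z.re + algebraMap F L z.im * x := by
  rw [algEquivOfFinrankEqTwo, AlgEquiv.ofBijective_apply, lift_apply_apply, Algebra.smul_def,
    Algebra.smul_def, mul_one]

end QuadraticAlgebra

theorem Algebra.norm_algebraMap_add_algebraMap_mul {F L : Type*} [Field F] [Field L]
    [Algebra F L] (hL : finrank F L = 2) {d : F} (hd : ∀ r : F, r ^ 2 ≠ d) {α : L}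
    (hα : α ^ 2 = algebraMap F L d) (x y : F) :
    Algebra.norm F (algebraMap F L x + algebraMap F L y * α) = x ^ 2 - d * y ^ 2 := by
  have : Fact (∀ r : F, r ^ 2 ≠ d + 0 * r) := ⟨by simpa using hd⟩
  have hα' : α * α = d • 1 + (0 : F) • α := by simp [← sq, hα, Algebra.smul_def]
  rw [← algEquivOfFinrankEqTwo_apply hL α hα' ⟨x, y⟩, Algebra.norm_eq_of_algEquiv,
    Algebra.norm_quadraticAlgebra_apply, norm_def]
  ring

theorem isUnit_add_mul_of_isUnit_sq_sub_mul_sq {R : Type*} [CommRing R] {a b d α : R}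
    (hα : α ^ 2 = d) (h : IsUnit (a ^ 2 - d * b ^ 2)) : IsUnit (a + b * α) :=
  isUnit_of_mul_isUnit_left (y := a - b * α) <| by
    rwa [show (a + b * α) * (a - b * α) = a ^ 2 - d * b ^ 2 by rw [← hα]; ring]

theorem NumberField.exists_unit_norm_eq_neg_one_of_sq_sub_mul_sq {K : Type*} [Field K]
    [CharZero K] (hK : finrank ℚ K = 2) {d : ℤ} (hd : ∀ r : ℚ, r ^ 2 ≠ d) {α : 𝓞 K}
    (hα : α ^ 2 = d) {a b : ℤ} (hab : a ^ 2 - d * b ^ 2 = -1) :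
    ∃ u : (𝓞 K)ˣ, Algebra.norm ℚ (u : K) = -1 := by
  have hunit : IsUnit ((a : 𝓞 K) + b * α) := by
    refine isUnit_add_mul_of_isUnit_sq_sub_mul_sq hα ?_
    rw [show (a : 𝓞 K) ^ 2 - d * b ^ 2 = -1 by exact_mod_cast hab]
    exact isUnit_one.neg
  refine ⟨hunit.unit, ?_⟩
  have hαK : (α : K) ^ 2 = algebraMap ℚ K d := by
    rw [map_intCast, ← map_intCast (algebraMap (𝓞 K) K), ← hα, map_pow]
  have hnorm := Algebra.norm_algebraMap_add_algebraMap_mul hK hd hαK a b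
  simp only [map_intCast] at hnorm
  rw [IsUnit.unit_spec, map_add, map_mul, map_intCast, map_intCast, hnorm]
  exact_mod_cast hab

/-- For a prime `p ≡ 1 (mod 4)`, the real quadratic field `ℚ(√p)` has a unit of norm `−1`
(equivalently, a fundamental unit of `ℚ(√p)` has norm `−1`). A number field `K` of degree
`2` over `ℚ` containing a square root of `p` is precisely `ℚ(√p)`. -/
theorem exists_unit_norm_neg_one (p : ℕ) (hp : Nat.Prime p) (hmod : p % 4 = 1)
    (K : Type) [Field K] [NumberField K] (hK : Module.finrank ℚ K = 2)
    (α : K) (hα : α ^ 2 = (p : K)) :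
    ∃ u : (NumberField.RingOfIntegers K)ˣ,
      Algebra.norm ℚ ((u : NumberField.RingOfIntegers K) : K) = -1 := by
  obtain ⟨a, b, hab⟩ := hp.exists_sq_sub_mul_sq_eq_neg_one hmod
  have hp_not_sq (r : ℚ) : r ^ 2 ≠ ((p : ℤ) : ℚ) := fun hr =>
    (Nat.prime_iff.mp hp).not_isSquare <|
      Rat.isSquare_natCast_iff.mp ⟨r, by rw [← sq]; exact_mod_cast hr.symm⟩
  let αO : 𝓞 K := ⟨α, .of_pow two_pos (hα ▸ isIntegral_natCast p)⟩
  exact exists_unit_norm_eq_neg_one_of_sq_sub_mul_sq hK hp_not_sq (α := αO)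
    (by ext; push_cast; exact hα) hab
end

section
/- Let K be a number field whose class number is odd, and let S be a finite set of places of K containing all archimedean places. Then the natural map R_S^×/(R_S^×)² → K(S) induced by the inclusion R_S^× ⊆ K^× is an isomorphism, where K(S) = {x ∈ K^×/(K^×)² : ord_v(x) ≡ 0 (mod 2) for all finite places v ∉ S}. -/
/-!
If an `S`-unit is an `n`-th power `y ^ n` in `K`, then `y` has valuation zero away from `S`
as well, so it is an `S`-unit. Conversely, let `x` have valuation divisible by `n` at every
prime outside `S`. There is a fractional ideal `I` with `I ^ n = (x)` up to a factor supported
on `S`. The class of `I ^ n` then lies in the image of the ideals supported on `S`, and since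
`n` is prime to the class number, so does the class of `I`: `I = (y) E` with `E` supported on
`S`. Hence `x / y ^ n` has valuation zero away from `S`, so the class of `x` comes from an
`S`-unit.
-/

open IsDedekindDomain NumberField
open scoped nonZeroDivisors

theorem Subgroup.mem_of_pow_mem_of_coprime {G Q : Type*} [Group G] [Group Q] [Finite Q]
    {f : G →* Q} {H : Subgroup G} (hH : f.ker ≤ H) {n : ℕ} (hn : n.Coprime (Nat.card Q))
    {g : G} (hg : g ^ n ∈ H) : g ∈ H := by
  obtain ⟨m, hm⟩ :=
    exists_pow_eq_self_of_coprime (hn.coprime_dvd_right (_root_.orderOf_dvd_natCard (f g)))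
  have hker : ((g ^ n) ^ m)⁻¹ * g ∈ H := hH <| by
    rw [MonoidHom.mem_ker, map_mul, map_inv, map_pow, map_pow, hm, inv_mul_cancel]
  simpa using H.mul_mem (H.pow_mem hg m) hker

theorem ClassGroup.ker_mk {R K : Type*} [CommRing R] [IsDomain R] [Field K] [Algebra R K]
    [IsFractionRing R K] : (ClassGroup.mk K).ker = (toPrincipalIdeal R K).range := by
  ext I
  rw [MonoidHom.mem_ker, ClassGroup.mk_eq_one_iff, FractionalIdeal.isPrincipal_iff,
    mem_principal_ideals_iff]
  exact exists_congr fun _ => eq_comm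

namespace FractionalIdeal

variable {R : Type*} [CommRing R] [IsDedekindDomain R] {K : Type*} [Field K]
  [Algebra R K] [IsFractionRing R K]

theorem count_spanSingleton (v : HeightOneSpectrum R) (x : Kˣ) :
    count K v (spanSingleton R⁰ (x : K)) = -(v.valuationOfNeZero x).toAdd := by
  set a := IsLocalization.sec R⁰ (x : K)
  have hx : spanSingleton R⁰ (x : K) =
      spanSingleton R⁰ (algebraMap R K a.2)⁻¹ * ↑(Ideal.span {a.1} : Ideal R) := by
    have ha : algebraMap R K a.2 ≠ 0 :=
      IsLocalization.to_map_ne_zero_of_mem_nonZeroDivisors _ le_rfl a.2.2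
    rw [coeIdeal_span_singleton, spanSingleton_mul_spanSingleton, ← IsLocalization.sec_spec,
      mul_comm (x : K), inv_mul_cancel_left₀ ha]
  rw [count_well_defined K v (spanSingleton_ne_zero_iff.mpr x.ne_zero) hx]
  simp only [HeightOneSpectrum.valuationOfNeZero, HeightOneSpectrum.valuationOfNeZeroToFun,
    MonoidHom.coe_mk, OneHom.coe_mk, toAdd_ofAdd, a]
  ring

theorem exists_count_eq (e : HeightOneSpectrum R → ℤ)
    (he : ∀ᶠ v in Filter.cofinite, e v = 0) :
    ∃ I : (FractionalIdeal R⁰ K)ˣ, ∀ v, count K v (I : FractionalIdeal R⁰ K) = e v := by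
  have hne : ∏ᶠ v : HeightOneSpectrum R, (v.asIdeal : FractionalIdeal R⁰ K) ^ e v ≠ 0 :=
    finprod_induction (· ≠ 0) one_ne_zero (fun _ _ => mul_ne_zero)
      fun v => zpow_ne_zero _ (coeIdeal_ne_zero.mpr v.ne_bot)
  exact ⟨Units.mk0 _ hne, fun v => count_finprod K v e he⟩

variable (K) in
def supportedIn (S : Set (HeightOneSpectrum R)) : Subgroup (FractionalIdeal R⁰ K)ˣ where
  carrier := {I | ∀ v ∉ S, count K v (I : FractionalIdeal R⁰ K) = 0}
  one_mem' v _ := count_one K v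
  mul_mem' {I J} hI hJ v hv := by
    rw [Units.val_mul, count_mul K v I.ne_zero J.ne_zero, hI v hv, hJ v hv, add_zero]
  inv_mem' {I} hI v hv := by
    rw [Units.val_inv_eq_inv_val, count_inv, hI v hv, neg_zero]

variable {S : Set (HeightOneSpectrum R)}

theorem mem_supportedIn {I : (FractionalIdeal R⁰ K)ˣ} :
    I ∈ supportedIn K S ↔ ∀ v ∉ S, count K v (I : FractionalIdeal R⁰ K) = 0 :=
  Iff.rfl

theorem mul_inv_mem_supportedIn_iff {I J : (FractionalIdeal R⁰ K)ˣ} :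
    I * J⁻¹ ∈ supportedIn K S ↔
      ∀ v ∉ S, count K v (I : FractionalIdeal R⁰ K) = count K v (J : FractionalIdeal R⁰ K) := by
  refine forall₂_congr fun v _ => ?_
  rw [Units.val_mul, Units.val_inv_eq_inv_val, count_mul K v I.ne_zero (inv_ne_zero J.ne_zero),
    count_inv, add_neg_eq_zero]

end FractionalIdeal

open FractionalIdeal

section

variable {R : Type*} [CommRing R] [IsDedekindDomain R] {K : Type*} [Field K]
  [Algebra R K] [IsFractionRing R K] {S : Set (HeightOneSpectrum R)} {n : ℕ}

theorem Set.mem_unit_iff_count {x : Kˣ} :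
    x ∈ S.unit K ↔ ∀ v ∉ S, count K v (spanSingleton R⁰ (x : K)) = 0 := by
  refine forall₂_congr fun v _ => Iff.symm ?_
  rw [count_spanSingleton, neg_eq_zero, toAdd_eq_zero, ← WithZero.coe_inj,
    HeightOneSpectrum.valuationOfNeZero_eq, WithZero.coe_one]

theorem Set.pow_mem_unit_iff (hn : n ≠ 0) {x : Kˣ} : x ^ n ∈ S.unit K ↔ x ∈ S.unit K := by
  simp only [Set.mem_unit_iff_count, Units.val_pow_eq_pow_val, ← spanSingleton_pow, count_pow,
    mul_eq_zero, Nat.cast_eq_zero, hn, false_or]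

theorem toPrincipalIdeal_mem_supportedIn_iff {x : Kˣ} :
    toPrincipalIdeal R K x ∈ supportedIn K S ↔ x ∈ S.unit K := by
  rw [mem_supportedIn, coe_toPrincipalIdeal, Set.mem_unit_iff_count]

theorem IsDedekindDomain.HeightOneSpectrum.valuationOfNeZeroMod_mk (v : HeightOneSpectrum R)
    (x : Kˣ) :
    v.valuationOfNeZeroMod n (QuotientGroup.mk x : Kˣ ⧸ (powMonoidHom n : Kˣ →* Kˣ).range) =
      Multiplicative.ofAdd ((v.valuationOfNeZero x).toAdd : ZMod n) :=
  rfl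

theorem IsDedekindDomain.selmerGroup.mk_mem_iff {x : Kˣ} :
    (QuotientGroup.mk x : Kˣ ⧸ (powMonoidHom n : Kˣ →* Kˣ).range) ∈
        selmerGroup (R := R) (S := S) ↔
      ∀ v ∉ S, (n : ℤ) ∣ count K v (spanSingleton R⁰ (x : K)) := by
  refine forall₂_congr fun v _ => ?_
  rw [v.valuationOfNeZeroMod_mk, ofAdd_eq_one, ZMod.intCast_zmod_eq_zero_iff_dvd,
    count_spanSingleton, dvd_neg]

theorem Set.ker_mk'_comp_unit_subtype (hn : n ≠ 0) :
    ((QuotientGroup.mk' (powMonoidHom n : Kˣ →* Kˣ).range).comp (S.unit K).subtype).ker =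
      (powMonoidHom n : S.unit K →* S.unit K).range := by
  ext u
  simp only [MonoidHom.mem_ker, MonoidHom.comp_apply, Subgroup.coe_subtype,
    QuotientGroup.mk'_apply, QuotientGroup.eq_one_iff, MonoidHom.mem_range, powMonoidHom_apply]
  constructor
  · rintro ⟨y, hy⟩
    exact ⟨⟨y, (Set.pow_mem_unit_iff hn).mp (hy ▸ u.2)⟩, Subtype.ext hy⟩
  · rintro ⟨y, rfl⟩
    exact ⟨y, rfl⟩

theorem Set.range_mk'_comp_unit_subtype_le_selmerGroup :
    ((QuotientGroup.mk' (powMonoidHom n : Kˣ →* Kˣ).range).comp (S.unit K).subtype).range ≤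
      selmerGroup (R := R) (S := S) := by
  rintro _ ⟨u, rfl⟩
  rw [MonoidHom.comp_apply, QuotientGroup.mk'_apply, Subgroup.coe_subtype,
    selmerGroup.mk_mem_iff]
  exact fun v hv => (Set.mem_unit_iff_count.mp u.2 v hv).symm ▸ dvd_zero _

theorem Set.selmerGroup_le_range_mk'_comp_unit_subtype [Finite (ClassGroup R)]
    (hn : n.Coprime (Nat.card (ClassGroup R))) :
    selmerGroup (R := R) (S := S) ≤
      ((QuotientGroup.mk' (powMonoidHom n : Kˣ →* Kˣ).range).comp (S.unit K).subtype).range := by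
  intro c hc
  obtain ⟨x, rfl⟩ := QuotientGroup.mk_surjective c
  rw [selmerGroup.mk_mem_iff] at hc
  obtain ⟨I, hI⟩ := exists_count_eq (K := K) (fun v => count K v (spanSingleton R⁰ (x : K)) / n)
    ((finite_factors _).mono fun v hv => by rw [hv, Int.zero_ediv])
  have hIn : I ^ n * (toPrincipalIdeal R K x)⁻¹ ∈ supportedIn K S := by
    refine mul_inv_mem_supportedIn_iff.mpr fun v hv => ?_
    rw [Units.val_pow_eq_pow_val, count_pow, hI, coe_toPrincipalIdeal,
      Int.mul_ediv_cancel' (hc v hv)]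
  have hx : toPrincipalIdeal R K x ∈ (toPrincipalIdeal R K).range := ⟨x, rfl⟩
  have hI' : I ∈ supportedIn K S ⊔ (toPrincipalIdeal R K).range := by
    refine Subgroup.mem_of_pow_mem_of_coprime (f := ClassGroup.mk K) ?_ hn ?_
    · exact ClassGroup.ker_mk.trans_le le_sup_right
    · simpa using Subgroup.mul_mem_sup hIn hx
  obtain ⟨E, hE, _, ⟨y, rfl⟩, rfl⟩ := Subgroup.mem_sup.mp hI'
  refine ⟨⟨x * (y ^ n)⁻¹, ?_⟩, ?_⟩
  · have hxy : toPrincipalIdeal R K (x * (y ^ n)⁻¹) =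
        E ^ n * ((E * toPrincipalIdeal R K y) ^ n * (toPrincipalIdeal R K x)⁻¹)⁻¹ := by
      simp [mul_pow, mul_comm, mul_assoc]
    rw [← toPrincipalIdeal_mem_supportedIn_iff, hxy]
    exact mul_mem (pow_mem hE n) (inv_mem hIn)
  · rw [MonoidHom.comp_apply, QuotientGroup.mk'_apply, Subgroup.coe_subtype, QuotientGroup.eq]
    exact ⟨y, by simp⟩

theorem Set.range_mk'_comp_unit_subtype [Finite (ClassGroup R)]
    (hn : n.Coprime (Nat.card (ClassGroup R))) :
    ((QuotientGroup.mk' (powMonoidHom n : Kˣ →* Kˣ).range).comp (S.unit K).subtype).range =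
      selmerGroup (R := R) (S := S) :=
  Set.range_mk'_comp_unit_subtype_le_selmerGroup.antisymm
    (Set.selmerGroup_le_range_mk'_comp_unit_subtype hn)

end

theorem sunits_mod_squares_iso_selmer_general (K : Type) [Field K] [NumberField K]
    (hK : Odd (NumberField.classNumber K))
    (S : Set (HeightOneSpectrum (𝓞 K))) :
    MonoidHom.ker ((QuotientGroup.mk' (powMonoidHom 2 : Kˣ →* Kˣ).range).comp
        (S.unit K).subtype)
      = (powMonoidHom 2 : ↥(S.unit K) →* ↥(S.unit K)).range ∧
    MonoidHom.range ((QuotientGroup.mk' (powMonoidHom 2 : Kˣ →* Kˣ).range).comp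
        (S.unit K).subtype)
      = selmerGroup (R := 𝓞 K) (K := K) (S := S) (n := 2) := by
  refine ⟨Set.ker_mk'_comp_unit_subtype two_ne_zero, Set.range_mk'_comp_unit_subtype ?_⟩
  rwa [Nat.card_eq_fintype_card, Nat.coprime_two_left, ← NumberField.classNumber]

/-- Let `K` be a number field with odd class number and let `S` be a finite set of
(finite) places of `K` (together with all archimedean places, which play no role in the
definitions below). The natural map `R_S^× / (R_S^×)² → K(S)`, induced by the inclusion
of the `S`-units `R_S^× ⊆ K^×`, is an isomorphism onto the Selmer group
`K(S) = {x ∈ K^×/(K^×)² : ord_v(x) ≡ 0 mod 2 for all finite v ∉ S}`: the composite map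
`R_S^× → K^× → K^×/(K^×)²` has kernel exactly the squares of `S`-units, and image exactly
`K(S)`. -/
theorem sunits_mod_squares_iso_selmer (K : Type) [Field K] [NumberField K]
    (hK : Odd (NumberField.classNumber K))
    (S : Set (HeightOneSpectrum (𝓞 K))) (hS : S.Finite) :
    MonoidHom.ker ((QuotientGroup.mk' (powMonoidHom 2 : Kˣ →* Kˣ).range).comp
        (S.unit K).subtype)
      = (powMonoidHom 2 : ↥(S.unit K) →* ↥(S.unit K)).range ∧
    MonoidHom.range ((QuotientGroup.mk' (powMonoidHom 2 : Kˣ →* Kˣ).range).comp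
        (S.unit K).subtype)
      = selmerGroup (R := 𝓞 K) (K := K) (S := S) (n := 2) :=
  sunits_mod_squares_iso_selmer_general K hK S
end

section
/- There are no rational numbers a, b with 2a² − 241b² = 723 (that is, the conic 2y₁² − 241y₄² = 3·241 has no rational points; in fact it has no points over ℚ₂). -/
/-!
Since `241 ≡ 1` and `723 ≡ 3 (mod 8)`, every solution of `2x² − 241y² = 723z²` in `ℤ₂` has
`x`, `y`, `z` all even, as a check modulo 8 shows. A point `(a, b)` over `ℚ₂` gives, after
multiplying by a large power `2ᵏ`, an integral solution with `z = 2ᵏ`; dividing by 2 `k` times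
leads to one with `z = 1`, which is odd. Rational points are `2`-adic points.
-/

open PadicInt

theorem two_dvd_of_conic_zmod_eight (x y z : ZMod 8) (h : 2 * x ^ 2 - 241 * y ^ 2 = 723 * z ^ 2) :
    2 ∣ x ∧ 2 ∣ y ∧ 2 ∣ z := by
  have key : ∀ x y z : ZMod 8, 2 * x ^ 2 - 241 * y ^ 2 = 723 * z ^ 2 →
      (∃ c, x = 2 * c) ∧ (∃ c, y = 2 * c) ∧ ∃ c, z = 2 * c := by decide
  exact key x y z h

theorem PadicInt.dvd_of_dvd_toZModPow {p : ℕ} [Fact p.Prime] {n : ℕ} (hn : n ≠ 0) {x : ℤ_[p]}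
    (h : (p : ZMod (p ^ n)) ∣ toZModPow n x) : (p : ℤ_[p]) ∣ x := by
  obtain ⟨c, hc⟩ := h
  have hker : x - p * c.val ∈ RingHom.ker (toZModPow n) := by
    simp [RingHom.mem_ker, hc]
  rw [ker_toZModPow, Ideal.mem_span_singleton] at hker
  have := ((dvd_pow_self (p : ℤ_[p]) hn).trans hker).add (dvd_mul_right (p : ℤ_[p]) c.val)
  rwa [sub_add_cancel] at this

theorem two_dvd_of_conic_padicInt (x y z : ℤ_[2]) (h : 2 * x ^ 2 - 241 * y ^ 2 = 723 * z ^ 2) :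
    2 ∣ x ∧ 2 ∣ y ∧ 2 ∣ z := by
  have h8 := congrArg (toZModPow 3) h
  simp only [map_sub, map_mul, map_pow, map_ofNat] at h8
  obtain ⟨hx, hy, hz⟩ := two_dvd_of_conic_zmod_eight _ _ _ h8
  have lift {w : ℤ_[2]} (hw : (2 : ZMod 8) ∣ toZModPow 3 w) : 2 ∣ w :=
    dvd_of_dvd_toZModPow (p := 2) (n := 3) three_ne_zero hw
  exact ⟨lift hx, lift hy, lift hz⟩

theorem conic_ne_two_pow_padicInt (k : ℕ) (x y : ℤ_[2]) :
    2 * x ^ 2 - 241 * y ^ 2 ≠ 723 * (2 ^ k) ^ 2 := by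
  induction k generalizing x y with
  | zero =>
    intro h
    have h2 : (2 : ℤ_[2]) ∣ 1 := by
      simpa using (two_dvd_of_conic_padicInt x y 1 (by simpa using h)).2.2
    exact p_nonunit (p := 2) (by exact_mod_cast isUnit_of_dvd_one h2)
  | succ k ih =>
    intro h
    obtain ⟨⟨x, rfl⟩, ⟨y, rfl⟩, -⟩ := two_dvd_of_conic_padicInt _ _ _ h
    refine ih x y (mul_left_cancel₀ (by norm_num : (4 : ℤ_[2]) ≠ 0) ?_)
    linear_combination h

theorem Padic.eventually_exists_coe_eq_pow_mul {p : ℕ} [Fact p.Prime] (x : ℚ_[p]) :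
    ∀ᶠ n in Filter.atTop, ∃ z : ℤ_[p], (z : ℚ_[p]) = p ^ n * x := by
  have hp : ‖(p : ℚ_[p])‖ < 1 := by
    rw [Padic.norm_p]
    exact inv_lt_one_of_one_lt₀ (by exact_mod_cast (Fact.out : p.Prime).one_lt)
  have hlim := (tendsto_pow_atTop_nhds_zero_of_norm_lt_one hp).mul_const x
  rw [zero_mul] at hlim
  filter_upwards [hlim (Metric.closedBall_mem_nhds 0 one_pos)] with n hn
  exact ⟨⟨_, by simpa using hn⟩, rfl⟩

/-- The conic `2y₁² − 241y₄² = 3·241 = 723` has no rational points; in fact it has no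
points over the field `ℚ₂` of 2-adic numbers. -/
theorem conic_no_rational_points :
    (¬∃ a b : ℚ, 2 * a ^ 2 - 241 * b ^ 2 = 723) ∧
      ¬∃ a b : ℚ_[2], 2 * a ^ 2 - 241 * b ^ 2 = 723 := by
  have padic : ¬∃ a b : ℚ_[2], 2 * a ^ 2 - 241 * b ^ 2 = 723 := by
    rintro ⟨a, b, h⟩
    obtain ⟨k, ⟨x, hx⟩, ⟨y, hy⟩⟩ := ((Padic.eventually_exists_coe_eq_pow_mul a).and
      (Padic.eventually_exists_coe_eq_pow_mul b)).exists
    apply conic_ne_two_pow_padicInt k x y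
    apply Subtype.coe_injective
    change 2 * (x : ℚ_[2]) ^ 2 - 241 * (y : ℚ_[2]) ^ 2 = 723 * ((2 : ℚ_[2]) ^ k) ^ 2
    rw [hx, hy, Nat.cast_ofNat]
    linear_combination (2 : ℚ_[2]) ^ (2 * k) * h
  exact ⟨fun ⟨a, b, h⟩ => padic ⟨a, b, by exact_mod_cast congrArg (Rat.cast : ℚ → ℚ_[2]) h⟩,
    padic⟩
end
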